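/- Suppose the kernel functions K_1,…,K_n are singular and J is an arbitrary n-field function. Then for every y ∈ S̄ and every j ∈ {0,1,…,n} with m_j(y) ≠ -∞ there exist δ > 0 and a nonempty closed interval W ⊆ [0,1] such that for every x ∈ S̄ with ‖x - y‖ ≤ δ: (i) W ⊆ I_j(x) and |t - x_i| ≥ δ for all t ∈ W and all i = 1,…,n; (ii) m_j(x) = sup_{t ∈ W} F(x,t). -/

import Mathlib

open Set Filter
open scoped BigOperators Topology

noncomputable section

/-- The real part of an extended-real-valued function. -/
def toR (K : ℝ → EReal) : ℝ → ℝ := fun t => (K t).toReal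

/-- A *kernel function*: finite-valued, continuous and concave on `[-1,0)` and `(0,1]`,
never `+∞`, and with coinciding one-sided limits at `0` (given by the value `K 0`). -/
structure IsKernel (K : ℝ → EReal) : Prop where
  ne_top : ∀ t, K t ≠ ⊤
  finite_left : ∀ t ∈ Ico (-1:ℝ) 0, K t ≠ ⊥
  finite_right : ∀ t ∈ Ioc (0:ℝ) 1, K t ≠ ⊥
  cont_left : ContinuousOn (toR K) (Ico (-1:ℝ) 0)
  cont_right : ContinuousOn (toR K) (Ioc (0:ℝ) 1)
  concave_left : ConcaveOn ℝ (Ico (-1:ℝ) 0) (toR K)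
  concave_right : ConcaveOn ℝ (Ioc (0:ℝ) 1) (toR K)
  tendsto_left : Tendsto K (nhdsWithin 0 (Iio 0)) (nhds (K 0))
  tendsto_right : Tendsto K (nhdsWithin 0 (Ioi 0)) (nhds (K 0))

/-- Left one-sided derivative. -/
def Dm (f : ℝ → ℝ) (t : ℝ) : ℝ := derivWithin f (Iio t) t

/-- Right one-sided derivative. -/
def Dp (f : ℝ → ℝ) (t : ℝ) : ℝ := derivWithin f (Ioi t) t

/-- Condition (PM_c): periodized `c`-monotonicity. -/
def PMcond (K : ℝ → EReal) (c : ℝ) : Prop :=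
  ∀ t ∈ Ioo (0:ℝ) 1, c ≤ Dm (toR K) t - Dm (toR K) (t - 1)

/-- An *n-field function*: bounded above, never `+∞`, finite at more than `n` points of
`[0,1]`, where the endpoints count with weight `1/2`. -/
structure IsNField (n : ℕ) (J : ℝ → EReal) : Prop where
  ne_top : ∀ t, J t ≠ ⊤
  bdd : ∃ M : ℝ, ∀ t ∈ Icc (0:ℝ) 1, J t ≤ (M : EReal)
  count : (∃ T : Finset ℝ, ↑T ⊆ {t | t ∈ Ioo (0:ℝ) 1 ∧ J t ≠ ⊥} ∧ n + 1 ≤ T.card) ∨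
    ((∃ T : Finset ℝ, ↑T ⊆ {t | t ∈ Ioo (0:ℝ) 1 ∧ J t ≠ ⊥} ∧ n ≤ T.card) ∧
      (J 0 ≠ ⊥ ∨ J 1 ≠ ⊥))

/-- The open simplex `S`. -/
def openSimplex (n : ℕ) : Set (Fin n → ℝ) :=
  {y | StrictMono y ∧ ∀ i, y i ∈ Ioo (0:ℝ) 1}

/-- The closed simplex `S̄`. -/
def closedSimplex (n : ℕ) : Set (Fin n → ℝ) :=
  {y | Monotone y ∧ ∀ i, y i ∈ Icc (0:ℝ) 1}

/-- The left endpoint `y_j` of `I_j(y)`, with the convention `y_0 = 0`. -/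
def nodeLo {n : ℕ} (y : Fin n → ℝ) (j : ℕ) : ℝ :=
  if h : 0 < j ∧ j ≤ n then y ⟨j - 1, by omega⟩ else 0

/-- The right endpoint `y_{j+1}` of `I_j(y)`, with the convention `y_{n+1} = 1`. -/
def nodeHi {n : ℕ} (y : Fin n → ℝ) (j : ℕ) : ℝ :=
  if h : j < n then y ⟨j, h⟩ else 1

/-- The interval `I_j(y) = [y_j, y_{j+1}]`. -/
def Ij {n : ℕ} (y : Fin n → ℝ) (j : ℕ) : Set ℝ := Icc (nodeLo y j) (nodeHi y j)

/-- The sum of translates function `F(y,t) = J(t) + ∑ K_j(t - y_j)`. -/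
def SOT {n : ℕ} (K : Fin n → ℝ → EReal) (J : ℝ → EReal) (y : Fin n → ℝ) (t : ℝ) : EReal :=
  J t + ∑ i, K i (t - y i)

/-- The interval maximum `m_j(y) = sup_{t ∈ I_j(y)} F(y,t)`. -/
def mj {n : ℕ} (K : Fin n → ℝ → EReal) (J : ℝ → EReal) (y : Fin n → ℝ) (j : ℕ) : EReal :=
  ⨆ t ∈ Ij y j, SOT K J y t

/-- The regularity set `Y`. -/
def regSet {n : ℕ} (K : Fin n → ℝ → EReal) (J : ℝ → EReal) : Set (Fin n → ℝ) :=
  {y ∈ openSimplex n | ∀ j ≤ n, mj K J y j ≠ ⊥}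

/-- The difference function `Φ(y) = (m_1 - m_0, …, m_n - m_{n-1})`. -/
def PhiFun {n : ℕ} (K : Fin n → ℝ → EReal) (J : ℝ → EReal) (y : Fin n → ℝ) : Fin n → ℝ :=
  fun i => (mj K J y ((i : ℕ) + 1)).toReal - (mj K J y (i : ℕ)).toReal

/-- A map between (pseudo)metric spaces is *locally bi-Lipschitz* if every point has a
neighborhood on which the map is a bi-Lipschitz homeomorphism onto its image. -/
def LocallyBiLipschitz {α β : Type*} [PseudoMetricSpace α] [PseudoMetricSpace β]
    (f : α → β) : Prop :=
  ∀ x : α, ∃ U ∈ 𝓝 x, ∃ c C : ℝ, 0 < c ∧ ∀ a ∈ U, ∀ b ∈ U,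
    c * dist a b ≤ dist (f a) (f b) ∧ dist (f a) (f b) ≤ C * dist a b

/-- The relative interior of `[a,b] ⊆ [0,1]` in the space `[0,1]`. -/
def relIntIcc (a b : ℝ) : Set ℝ :=
  (if a = 0 then Ici a else Ioi a) ∩ (if b = 1 then Iic b else Iio b)

/-- Condition `(∞₊)`. -/
def CondInfPlus (J : ℝ → EReal) : Prop :=
  J 0 = ⊥ ∧ Tendsto J (nhdsWithin 0 (Ioi 0)) (nhds ⊥)

/-- Condition `(∞₋)`. -/
def CondInfMinus (J : ℝ → EReal) : Prop :=
  J 1 = ⊥ ∧ Tendsto J (nhdsWithin 1 (Iio 1)) (nhds ⊥)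

/-- Fenton's cusp condition `(∞'₊)`. -/
def CuspPlus (J : ℝ → EReal) : Prop :=
  ∀ M : ℝ, ∃ δ > (0:ℝ), ∀ s t : ℝ, 0 ≤ s → s < t → t ≤ δ →
    J s ≠ ⊥ → J t ≠ ⊥ → M ≤ ((J t).toReal - (J s).toReal) / (t - s)

/-- Fenton's cusp condition `(∞'₋)`. -/
def CuspMinus (J : ℝ → EReal) : Prop :=
  ∀ M : ℝ, ∃ δ > (0:ℝ), ∀ t s : ℝ, 1 - δ ≤ t → t < s → s ≤ 1 →
    J s ≠ ⊥ → J t ≠ ⊥ → ((J t).toReal - (J s).toReal) / (t - s) ≤ -M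

/-- `L : [0,1] → [0,∞)` is log-concave:
`L(λs + (1-λ)t) ≥ L(s)^λ L(t)^{1-λ}`. -/
def LogConcaveOn01 (L : ℝ → ℝ) : Prop :=
  ∀ s ∈ Icc (0:ℝ) 1, ∀ t ∈ Icc (0:ℝ) 1, ∀ l ∈ Icc (0:ℝ) 1,
    L s ^ l * L t ^ (1 - l) ≤ L (l * s + (1 - l) * t)


/-!
Since the kernels are singular and bounded above, while `J` is bounded above, `F(x, ·)` lies
below any prescribed level `c` within some distance `η` of the nodes `x i`, uniformly in `x`.
Choose `t₀ ∈ I_j(y)` with `c < F(y, t₀)`. Then `t₀` is `η`-far from the nodes of `y`, so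
`F(·, t₀)` is continuous at `y` and stays above `c` for `x` near `y`; hence the supremum over
`I_j(x)` is attained away from the nodes, i.e. on the part of `I_j(y)` that is `η / 2`-far from
them.
-/

theorem EReal.coe_finsetSum {ι : Type*} (s : Finset ι) (f : ι → ℝ) :
    ((∑ i ∈ s, f i : ℝ) : EReal) = ∑ i ∈ s, (f i : EReal) :=
  map_sum (⟨⟨Real.toEReal, EReal.coe_zero⟩, EReal.coe_add⟩ : ℝ →+ EReal) f s

namespace IsKernel

variable {K : ℝ → EReal} (hK : IsKernel K) {s : ℝ}
include hK

theorem ne_bot_of_ne_zero (hs : s ∈ Icc (-1:ℝ) 1) (h0 : s ≠ 0) : K s ≠ ⊥ := by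
  rcases h0.lt_or_gt with h | h
  · exact hK.finite_left s ⟨hs.1, h⟩
  · exact hK.finite_right s ⟨h, hs.2⟩

theorem coe_toR (hs : s ∈ Icc (-1:ℝ) 1) (h0 : s ≠ 0) : (toR K s : EReal) = K s :=
  EReal.coe_toReal (hK.ne_top s) (hK.ne_bot_of_ne_zero hs h0)

theorem continuousWithinAt_toR (hs : s ∈ Icc (-1:ℝ) 1) (h0 : s ≠ 0) :
    ContinuousWithinAt (toR K) (Icc (-1) 1) s := by
  rcases h0.lt_or_gt with h | h
  · rw [← continuousWithinAt_inter (Iio_mem_nhds h)]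
    exact (hK.cont_left s ⟨hs.1, h⟩).mono fun u hu => ⟨hu.1.1, hu.2⟩
  · rw [← continuousWithinAt_inter (Ioi_mem_nhds h)]
    exact (hK.cont_right s ⟨h, hs.2⟩).mono fun u hu => ⟨hu.2, hu.1.2⟩

theorem continuousAt_zero : ContinuousAt K 0 :=
  continuousAt_iff_continuous_left'_right'.2 ⟨hK.tendsto_left, hK.tendsto_right⟩

theorem continuousOn : ContinuousOn K (Icc (-1) 1) := by
  intro s hs
  by_cases h0 : s = 0
  · exact h0 ▸ hK.continuousAt_zero.continuousWithinAt
  · have hK_eq : K =ᶠ[𝓝[Icc (-1) 1] s] fun u => (toR K u : EReal) := by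
      filter_upwards [self_mem_nhdsWithin, nhdsWithin_le_nhds (eventually_ne_nhds h0)]
        with u hu hu0 using (hK.coe_toR hu hu0).symm
    exact (continuous_coe_real_ereal.continuousAt.comp_continuousWithinAt
      (hK.continuousWithinAt_toR hs h0)).congr_of_eventuallyEq hK_eq (hK.coe_toR hs h0).symm

theorem exists_le_coe : ∃ B : ℝ, ∀ s ∈ Icc (-1:ℝ) 1, K s ≤ B := by
  obtain ⟨s, -, hmax⟩ :=
    isCompact_Icc.exists_isMaxOn (nonempty_Icc.2 (by norm_num)) hK.continuousOn
  exact ⟨(K s).toReal, fun u hu => (hmax hu).trans (EReal.le_coe_toReal (hK.ne_top s))⟩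

theorem tendsto_nhds_zero_bot (hsing : K 0 = ⊥) : Tendsto K (𝓝 0) (𝓝 ⊥) :=
  hsing ▸ hK.continuousAt_zero

end IsKernel

section SumOfTranslates

variable {n : ℕ} {K : Fin n → ℝ → EReal} {J : ℝ → EReal} {x y : Fin n → ℝ} {t : ℝ}

theorem sub_mem_Icc_of_mem_closedSimplex (hx : x ∈ closedSimplex n) (ht : t ∈ Icc (0:ℝ) 1)
    (i : Fin n) : t - x i ∈ Icc (-1:ℝ) 1 :=
  ⟨by linarith [(hx.2 i).2, ht.1], by linarith [(hx.2 i).1, ht.2]⟩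

theorem SOT_le_add_kernel {M : ℝ} {B : Fin n → ℝ} (hJ : ∀ t ∈ Icc (0:ℝ) 1, J t ≤ M)
    (hB : ∀ k, ∀ s ∈ Icc (-1:ℝ) 1, K k s ≤ B k) (hx : x ∈ closedSimplex n)
    (ht : t ∈ Icc (0:ℝ) 1) (i : Fin n) :
    SOT K J x t ≤ ((M + ∑ k ∈ Finset.univ.erase i, B k : ℝ) : EReal) + K i (t - x i) := by
  have hrest : ∑ k ∈ Finset.univ.erase i, K k (t - x k) ≤
      ((∑ k ∈ Finset.univ.erase i, B k : ℝ) : EReal) := by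
    rw [EReal.coe_finsetSum]
    exact Finset.sum_le_sum fun k _ => hB k _ (sub_mem_Icc_of_mem_closedSimplex hx ht k)
  calc SOT K J x t = J t + (∑ k ∈ Finset.univ.erase i, K k (t - x k) + K i (t - x i)) := by
        rw [SOT, Finset.sum_erase_add _ _ (Finset.mem_univ i)]
    _ ≤ M + (((∑ k ∈ Finset.univ.erase i, B k : ℝ) : EReal) + K i (t - x i)) := by
        gcongr
        exact hJ t ht
    _ = _ := by rw [← add_assoc, ← EReal.coe_add]

theorem exists_SOT_le_near_nodes (hK : ∀ i, IsKernel (K i)) (hsing : ∀ i, K i 0 = ⊥) {M : ℝ}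
    (hJ : ∀ t ∈ Icc (0:ℝ) 1, J t ≤ M) (c : ℝ) :
    ∃ η > 0, ∀ x ∈ closedSimplex n, ∀ t ∈ Icc (0:ℝ) 1, ∀ i, |t - x i| ≤ η → SOT K J x t ≤ c := by
  choose B hB using fun i => (hK i).exists_le_coe
  set C : Fin n → ℝ := fun i => M + ∑ k ∈ Finset.univ.erase i, B k
  have hsmall : ∀ᶠ s in 𝓝 (0:ℝ), ∀ i, K i s ≤ ((c - C i : ℝ) : EReal) :=
    eventually_all.2 fun i =>
      (hK i).tendsto_nhds_zero_bot (hsing i) (eventually_le_nhds (EReal.bot_lt_coe _))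
  obtain ⟨η, hη, hball⟩ := Metric.nhds_basis_closedBall.eventually_iff.1 hsmall
  refine ⟨η, hη, fun x hx t ht i hti => ?_⟩
  calc SOT K J x t ≤ (C i : EReal) + K i (t - x i) := SOT_le_add_kernel hJ hB hx ht i
    _ ≤ (C i : EReal) + ((c - C i : ℝ) : EReal) := by
        gcongr
        exact hball (by simpa [Real.dist_eq] using hti) i
    _ = c := by rw [← EReal.coe_add, add_sub_cancel]

theorem SOT_eq_coe (hK : ∀ i, IsKernel (K i)) (hJt : J t ≠ ⊥) (hJt' : J t ≠ ⊤)
    (hx : x ∈ closedSimplex n) (ht : t ∈ Icc (0:ℝ) 1) (hxt : ∀ i, x i ≠ t) :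
    SOT K J x t = ((J t).toReal + ∑ i, toR (K i) (t - x i) : ℝ) := by
  rw [SOT, EReal.coe_add, EReal.coe_finsetSum, EReal.coe_toReal hJt' hJt]
  congr 1
  exact Finset.sum_congr rfl fun i _ => ((hK i).coe_toR
    (sub_mem_Icc_of_mem_closedSimplex hx ht i) (sub_ne_zero.2 (hxt i).symm)).symm

theorem tendsto_SOT_nhdsWithin (hK : ∀ i, IsKernel (K i)) (hJt : J t ≠ ⊥) (hJt' : J t ≠ ⊤)
    (hy : y ∈ closedSimplex n) (ht : t ∈ Icc (0:ℝ) 1) (hyt : ∀ i, y i ≠ t) :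
    Tendsto (fun x => SOT K J x t) (𝓝[closedSimplex n] y) (𝓝 (SOT K J y t)) := by
  have hreal : Tendsto (fun x => (J t).toReal + ∑ i, toR (K i) (t - x i))
      (𝓝[closedSimplex n] y) (𝓝 ((J t).toReal + ∑ i, toR (K i) (t - y i))) := by
    refine tendsto_const_nhds.add (tendsto_finsetSum _ fun i _ => ?_)
    exact (((hK i).continuousWithinAt_toR (sub_mem_Icc_of_mem_closedSimplex hy ht i)
      (sub_ne_zero.2 (hyt i).symm)).comp (f := fun x : Fin n → ℝ => t - x i)
      (continuous_const.sub (continuous_apply i)).continuousWithinAt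
      fun x hx => sub_mem_Icc_of_mem_closedSimplex hx ht i).tendsto
  have heq : ∀ᶠ x in 𝓝[closedSimplex n] y,
      ((J t).toReal + ∑ i, toR (K i) (t - x i) : ℝ) = SOT K J x t := by
    filter_upwards [self_mem_nhdsWithin, nhdsWithin_le_nhds
      (eventually_all.2 fun i => (continuous_apply i).continuousAt.eventually_ne (hyt i))]
      with x hx hxt using (SOT_eq_coe hK hJt hJt' hx ht hxt).symm
  rw [SOT_eq_coe hK hJt hJt' hy ht hyt]
  exact (EReal.tendsto_coe.2 hreal).congr' heq

end SumOfTranslates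

section Window

variable {n : ℕ} {x y z : Fin n → ℝ} {j : ℕ} {r s δ t : ℝ}

theorem nodeLo_le_iff (hz : Monotone z) (hz0 : ∀ i, 0 ≤ z i) (hj : j ≤ n) :
    nodeLo z j ≤ t ↔ 0 ≤ t ∧ ∀ i : Fin n, (i : ℕ) < j → z i ≤ t := by
  unfold nodeLo
  split_ifs with h
  · refine ⟨fun hzt => ⟨(hz0 _).trans hzt, fun i hi => (hz ?_).trans hzt⟩,
      fun hzt => hzt.2 _ (by simp only; omega)⟩
    exact Fin.le_iff_val_le_val.2 (by simp only; omega)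
  · obtain rfl : j = 0 := by omega
    simp

theorem le_nodeHi_iff (hz : Monotone z) (hz1 : ∀ i, z i ≤ 1) :
    t ≤ nodeHi z j ↔ t ≤ 1 ∧ ∀ i : Fin n, j ≤ (i : ℕ) → t ≤ z i := by
  unfold nodeHi
  split_ifs with h
  · refine ⟨fun hzt => ⟨hzt.trans (hz1 _), fun i hi => hzt.trans (hz ?_)⟩,
      fun hzt => hzt.2 _ le_rfl⟩
    exact Fin.le_iff_val_le_val.2 hi
  · exact ⟨fun ht => ⟨ht, fun i hi => absurd i.isLt (by omega)⟩, And.left⟩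

theorem Ij_subset_Icc (hy : y ∈ closedSimplex n) (j : ℕ) : Ij y j ⊆ Icc (0:ℝ) 1 := by
  refine Icc_subset_Icc ?_ ?_
  · unfold nodeLo; split_ifs
    exacts [(hy.2 _).1, le_rfl]
  · unfold nodeHi; split_ifs
    exacts [(hy.2 _).2, le_rfl]

/-- The part of `I_j(y)` at distance at least `r` from the nodes `y i`. -/
def window (y : Fin n → ℝ) (j : ℕ) (r : ℝ) : Set ℝ :=
  Icc (nodeLo (fun i => y i + r) j) (nodeHi (fun i => y i - r) j)

theorem window_zero : window y j 0 = Ij y j := by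
  simp [window, Ij]

theorem mem_window_iff (hy : y ∈ closedSimplex n) (hj : j ≤ n) (hr : 0 ≤ r) :
    t ∈ window y j r ↔ t ∈ Icc (0:ℝ) 1 ∧
      ∀ i : Fin n, ((i : ℕ) < j → y i + r ≤ t) ∧ (j ≤ (i : ℕ) → t ≤ y i - r) := by
  rw [window, mem_Icc, nodeLo_le_iff (hy.1.add_const r) (fun i => by linarith [(hy.2 i).1]) hj,
    le_nodeHi_iff (fun a b hab => sub_le_sub_right (hy.1 hab) r)
      (fun i => by linarith [(hy.2 i).2]), mem_Icc, forall_and]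
  tauto

theorem window_subset_window (hx : x ∈ closedSimplex n) (hy : y ∈ closedSimplex n) (hj : j ≤ n)
    (hs : 0 ≤ s) (hxy : dist x y ≤ δ) (hsr : s + δ ≤ r) : window y j r ⊆ window x j s := by
  intro t ht
  have hδ : 0 ≤ δ := dist_nonneg.trans hxy
  rw [mem_window_iff hy hj (by linarith)] at ht
  refine (mem_window_iff hx hj hs).2 ⟨ht.1, fun i => ?_⟩
  have hi := abs_le.1 ((Real.dist_eq _ _ ▸ dist_le_pi_dist x y i).trans hxy)
  exact ⟨fun h => by linarith [(ht.2 i).1 h], fun h => by linarith [(ht.2 i).2 h]⟩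

theorem mem_window_iff_le_abs_sub (hy : y ∈ closedSimplex n) (hj : j ≤ n) (hr : 0 ≤ r)
    (ht : t ∈ Ij y j) : t ∈ window y j r ↔ ∀ i, r ≤ |t - y i| := by
  rw [← window_zero, mem_window_iff hy hj le_rfl] at ht
  rw [mem_window_iff hy hj hr]
  refine ⟨fun h i => ?_, fun h => ⟨ht.1, fun i => ⟨fun hij => ?_, fun hij => ?_⟩⟩⟩
  · rcases lt_or_ge (i : ℕ) j with hij | hij
    · exact (le_abs_self _).trans' (by linarith [(h.2 i).1 hij])
    · exact (neg_le_abs _).trans' (by linarith [(h.2 i).2 hij])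
  · have := (ht.2 i).1 hij
    have := h i
    rw [abs_of_nonneg (by linarith)] at this
    linarith
  · have := (ht.2 i).2 hij
    have := h i
    rw [abs_of_nonpos (by linarith)] at this
    linarith

end Window

theorem biSup_eq_biSup_of_subset {α β : Type*} [CompleteLattice β] {f : α → β} {s t : Set α}
    (hst : s ⊆ t) {a : α} (ha : a ∈ s) (h : ∀ x ∈ t, x ∉ s → f x ≤ f a) :
    ⨆ x ∈ t, f x = ⨆ x ∈ s, f x := by
  refine le_antisymm (iSup₂_le fun x hx => ?_) (biSup_mono hst)
  by_cases hxs : x ∈ s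
  · exact le_iSup₂ (f := fun x _ => f x) x hxs
  · exact (h x hx hxs).trans (le_iSup₂ (f := fun x _ => f x) a ha)

theorem interval_maximum_localization_general
    {n : ℕ} (K : Fin n → ℝ → EReal) (J : ℝ → EReal)
    (hK : ∀ i, IsKernel (K i)) (hsing : ∀ i, K i 0 = ⊥) (hJ : IsNField n J)
    (y : Fin n → ℝ) (hy : y ∈ closedSimplex n)
    (j : ℕ) (hj : j ≤ n) (hm : mj K J y j ≠ ⊥) :
    ∃ δ > (0:ℝ), ∃ a b : ℝ, a ≤ b ∧ Icc a b ⊆ Icc (0:ℝ) 1 ∧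
      ∀ x ∈ closedSimplex n, dist x y ≤ δ →
        (Icc a b ⊆ Ij x j ∧ ∀ t ∈ Icc a b, ∀ i, δ ≤ |t - x i|) ∧
        mj K J x j = ⨆ t ∈ Icc a b, SOT K J x t := by
  obtain ⟨M, hM⟩ := hJ.bdd
  obtain ⟨t₀, ht₀, hF⟩ : ∃ t ∈ Ij y j, ⊥ < SOT K J y t := by
    simpa only [mj, lt_iSup_iff, exists_prop] using bot_lt_iff_ne_bot.2 hm
  obtain ⟨c, -, hcF⟩ := EReal.lt_iff_exists_real_btwn.1 hF
  obtain ⟨η, hη, hnear⟩ := exists_SOT_le_near_nodes hK hsing hM c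
  have hfar : ∀ i, η < |t₀ - y i| := fun i =>
    lt_of_not_ge fun h => (hnear y hy t₀ (Ij_subset_Icc hy j ht₀) i h).not_gt hcF
  have ht₀W : t₀ ∈ window y j (η / 2) :=
    (mem_window_iff_le_abs_sub hy hj (by positivity) ht₀).2 fun i => by linarith [hfar i]
  have hJt₀ : J t₀ ≠ ⊥ := fun h => by simp [SOT, h] at hF
  have hyt₀ : ∀ i, y i ≠ t₀ := fun i h => by simpa [h, hη.not_gt] using hfar i
  obtain ⟨ε, hε, hlow⟩ := Metric.mem_nhdsWithin_iff.1 <| tendsto_SOT_nhdsWithin hK hJt₀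
    (hJ.ne_top t₀) hy (Ij_subset_Icc hy j ht₀) hyt₀ (lt_mem_nhds hcF)
  obtain ⟨δ, hδ, hδη, hδε⟩ : ∃ δ > 0, δ ≤ η / 4 ∧ δ ≤ ε / 2 :=
    ⟨min (η / 4) (ε / 2), by positivity, min_le_left _ _, min_le_right _ _⟩
  refine ⟨δ, hδ, _, _, ht₀W.1.trans ht₀W.2,
    fun t ht => ((mem_window_iff hy hj (by positivity)).1 ht).1, fun x hx hxy => ?_⟩
  have hWx : window y j (η / 2) ⊆ Ij x j :=
    window_zero (y := x) ▸ window_subset_window hx hy hj le_rfl hxy (by linarith)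
  refine ⟨⟨hWx, fun t ht i => (mem_window_iff_le_abs_sub hx hj (by positivity) (hWx ht)).1
    (window_subset_window hx hy hj (by positivity) hxy (by linarith) ht) i⟩, ?_⟩
  refine biSup_eq_biSup_of_subset hWx ht₀W fun t ht htW => ?_
  obtain ⟨i, hi⟩ : ∃ i, |t - x i| < η / 2 + δ := by
    by_contra! h
    exact htW (window_subset_window hy hx hj (by positivity) (dist_comm x y ▸ hxy) le_rfl
      ((mem_window_iff_le_abs_sub hx hj (by positivity) ht).2 h))
  have hxy' : dist x y < ε := by linarith
  exact (hnear x hx t (Ij_subset_Icc hx j ht) i (by linarith)).trans (hlow ⟨hxy', hx⟩).le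

/-- (Lemma 3.2 / `lem:preZ`.) For singular kernels and an arbitrary
`n`-field function, if `m_j(y) ≠ -∞` then there are `δ > 0` and a nonempty closed
interval `W = [a,b] ⊆ [0,1]` such that for all `x ∈ S̄` with `‖x - y‖ ≤ δ`:
(i) `W ⊆ I_j(x)` and `W` has distance at least `δ` to `{x_1,…,x_n}`;
(ii) `m_j(x) = sup_{t ∈ W} F(x,t)`. -/
theorem interval_maximum_localization
    {n : ℕ} (hn : 1 ≤ n) (K : Fin n → ℝ → EReal) (J : ℝ → EReal)
    (hK : ∀ i, IsKernel (K i)) (hsing : ∀ i, K i 0 = ⊥) (hJ : IsNField n J)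
    (y : Fin n → ℝ) (hy : y ∈ closedSimplex n)
    (j : ℕ) (hj : j ≤ n) (hm : mj K J y j ≠ ⊥) :
    ∃ δ > (0:ℝ), ∃ a b : ℝ, a ≤ b ∧ Icc a b ⊆ Icc (0:ℝ) 1 ∧
      ∀ x ∈ closedSimplex n, dist x y ≤ δ →
        (Icc a b ⊆ Ij x j ∧ ∀ t ∈ Icc a b, ∀ i, δ ≤ |t - x i|) ∧
        mj K J x j = ⨆ t ∈ Icc a b, SOT K J x t :=
  interval_maximum_localization_general K J hK hsing hJ y hy j hj hm

end
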